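/- For every n ≥ 1 and every x ∈ [0,1], the inequality ∑_{k=0}^n C(n,k)² x^{2k} (1−x)^{2(n−k)} ≥ (1/4^n)·C(2n,n) holds, where C(n,k) denotes the binomial coefficient. -/

import Mathlib

/-!
By Parseval's identity on the unit circle, `∑ₖ bₙₖ(x)²` is the circle average of
`|x z + 1 - x|^(2n)`, because `(x z + 1 - x)ⁿ = ∑ₖ bₙₖ(x) zᵏ`. For `|z| = 1` we have
`|x z + 1 - x|² = 1 - 2 x (1 - x) (1 - Re z)`, which is smallest at `x = 1/2` since
`x (1 - x) ≤ 1/4` for every real `x`. At `x = 1/2` the sum is `C(2n,n)/4ⁿ` by Vandermonde.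
-/

open Finset Polynomial Real

theorem sum_range_sq_norm_eq_circleAverage (N : ℕ) (c : ℕ → ℂ) :
    ∑ k ∈ range N, ‖c k‖ ^ 2 =
      circleAverage (fun z ↦ ‖∑ k ∈ range N, c k * z ^ k‖ ^ 2) 0 1 := by
  set p : ℂ[X] := ∑ k ∈ range N, C (c k) * X ^ k
  have hcoeff (k : ℕ) : p.coeff k = if k < N then c k else 0 := by
    simp [p, finsetSum_coeff]
  have hsupp : p.support ⊆ range N := fun k hk ↦ by
    by_contra h
    simp_all [mem_support_iff]
  have heval (z : ℂ) : p.eval z = ∑ k ∈ range N, c k * z ^ k := by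
    simp [p, eval_finsetSum]
  rw [← sum_subset hsupp fun k hkN hk ↦ by
    rw [notMem_support_iff, hcoeff, if_pos (mem_range.mp hkN)] at hk; simp [hk]]
  simp_rw [← heval]
  rw [← p.sum_sq_norm_coeff_eq_circleAverage]
  refine sum_congr rfl fun k hk ↦ ?_
  rw [hcoeff, if_pos (mem_range.mp (hsupp hk))]

theorem sum_sq_norm_choose_mul_pow_eq_circleAverage (a b : ℂ) (n : ℕ) :
    ∑ k ∈ range (n + 1), ‖(n.choose k : ℂ) * a ^ k * b ^ (n - k)‖ ^ 2 =
      circleAverage (fun z ↦ ‖(a * z + b) ^ n‖ ^ 2) 0 1 := by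
  rw [sum_range_sq_norm_eq_circleAverage]
  congr with z
  rw [add_pow]
  congr 2
  exact sum_congr rfl fun k _ ↦ by ring

theorem sum_sq_bernsteinPolynomial_eval_eq_circleAverage (n : ℕ) (x : ℝ) :
    ∑ k ∈ range (n + 1), (bernsteinPolynomial ℝ n k).eval x ^ 2 =
      circleAverage (fun z ↦ ‖((x : ℂ) * z + (1 - x)) ^ n‖ ^ 2) 0 1 := by
  rw [← sum_sq_norm_choose_mul_pow_eq_circleAverage]
  refine sum_congr rfl fun k _ ↦ ?_
  rw [← sq_abs, ← Real.norm_eq_abs, ← Complex.norm_real]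
  simp [bernsteinPolynomial]

theorem sum_sq_bernsteinPolynomial_eval_half (n : ℕ) :
    ∑ k ∈ range (n + 1), (bernsteinPolynomial ℝ n k).eval (1 / 2) ^ 2 =
      1 / 4 ^ n * ((2 * n).choose n : ℝ) := by
  rw [← Nat.sum_range_choose_sq, Nat.cast_sum, mul_sum]
  refine sum_congr rfl fun k hk ↦ ?_
  have hkn : k + (n - k) = n := Nat.add_sub_cancel' (mem_range_succ_iff.mp hk)
  simp only [bernsteinPolynomial, eval_mul, eval_pow, eval_sub, eval_one, eval_X, eval_natCast]
  rw [show (1 : ℝ) - 1 / 2 = 1 / 2 by norm_num, mul_assoc, ← pow_add, hkn,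
    mul_pow, ← pow_mul, pow_mul', Nat.cast_pow]
  norm_num
  rw [one_div, inv_pow, mul_comm]

theorem norm_sq_mul_add_one_sub {z : ℂ} (hz : ‖z‖ = 1) (x : ℝ) :
    ‖(x : ℂ) * z + (1 - x)‖ ^ 2 = 1 - 2 * x * (1 - x) * (1 - z.re) := by
  have hz' : z.re * z.re + z.im * z.im = 1 := by
    rw [← Complex.normSq_apply, Complex.normSq_eq_norm_sq, hz, one_pow]
  rw [← Complex.normSq_eq_norm_sq, Complex.normSq_apply]
  simp only [Complex.add_re, Complex.add_im, Complex.mul_re, Complex.mul_im, Complex.sub_re,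
    Complex.sub_im, Complex.ofReal_re, Complex.ofReal_im, Complex.one_re, Complex.one_im]
  linear_combination x ^ 2 * hz'

theorem norm_half_mul_add_half_le {z : ℂ} (hz : ‖z‖ = 1) (x : ℝ) :
    ‖((1 / 2 : ℝ) : ℂ) * z + (1 - (1 / 2 : ℝ))‖ ≤ ‖(x : ℂ) * z + (1 - x)‖ := by
  refine pow_le_pow_iff_left₀ (norm_nonneg _) (norm_nonneg _) two_ne_zero |>.mp ?_
  rw [norm_sq_mul_add_one_sub hz, norm_sq_mul_add_one_sub hz]
  have hre : z.re ≤ 1 := hz ▸ Complex.re_le_norm z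
  nlinarith [sq_nonneg (2 * x - 1)]

theorem bernstein_sq_sum_ge_central (n : ℕ) (x : ℝ) :
    (1 / 4 ^ n : ℝ) * ((2 * n).choose n : ℝ) ≤
      ∑ k ∈ Finset.range (n + 1),
        (n.choose k : ℝ) ^ 2 * x ^ (2 * k) * (1 - x) ^ (2 * (n - k)) := by
  have hint (y : ℝ) : CircleIntegrable (fun z ↦ ‖((y : ℂ) * z + (1 - y)) ^ n‖ ^ 2) 0 1 :=
    (by fun_prop : Continuous _).continuousOn.circleIntegrable'
  calc (1 / 4 ^ n : ℝ) * ((2 * n).choose n : ℝ)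
      = circleAverage (fun z ↦ ‖(((1 / 2 : ℝ) : ℂ) * z + (1 - (1 / 2 : ℝ))) ^ n‖ ^ 2) 0 1 := by
        rw [← sum_sq_bernsteinPolynomial_eval_half,
          sum_sq_bernsteinPolynomial_eval_eq_circleAverage]
    _ ≤ circleAverage (fun z ↦ ‖((x : ℂ) * z + (1 - x)) ^ n‖ ^ 2) 0 1 :=
        circleAverage_mono (hint _) (hint x) fun z hz ↦ by
          rw [abs_one, mem_sphere_zero_iff_norm] at hz
          rw [norm_pow, norm_pow]
          gcongr
          exact norm_half_mul_add_half_le hz x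
    _ = _ := by
        rw [← sum_sq_bernsteinPolynomial_eval_eq_circleAverage]
        refine sum_congr rfl fun k _ ↦ ?_
        simp only [bernsteinPolynomial, eval_mul, eval_pow, eval_sub, eval_one, eval_X,
          eval_natCast]
        ring
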